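/- Let n ≥ 2 be an integer. Define g₁(m) = (n+m)(m/2+1)/((n+m+2)(n+m/2)), f₂(m) = n(n+m)/(4(n+m+2)(n+m/2+1)(n+m/2)), f₃(m) = (8n+m(m+2)(m+n+2))/(4(m+n+2)(2n+m)(2n+m+2)), f̃₄(m) = (1/2)(1 - (m+n)/(m+n+1) - ((m/2+1)(m+n))/((m+n+1)(m/2+n))), and f₄(m) = 1/4 - f̃₄(m) + f₃(m). Define sequences (α_k), (β_k) of real numbers by α₁ = -n/(24(n+1)(n+2)), β₁ = n/(24(n+1)), and for all k ≥ 1: α_{k+1} = (β_k - 1/6)·f₂(kn) + α_k·g₁(kn) and β_{k+1} = 1/24 + (β_k - 1/6)·f₂(kn) - (1/6)·f₃(kn) + β_k·f₄(kn). Then for every k ≥ 1, α_k = -nk/(12(kn+2)((k+1)n+2)) and β_k = nk/(12((k+1)n+2)). -/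
import Mathlib


/-- `g₁(m) = (n+m)(m/2+1)/((n+m+2)(n+m/2))`. -/
noncomputable def g₁ (n m : ℝ) : ℝ := (n + m) * (m / 2 + 1) / ((n + m + 2) * (n + m / 2))

/-- `f₂(m) = n(n+m)/(4(n+m+2)(n+m/2+1)(n+m/2))`. -/
noncomputable def f₂ (n m : ℝ) : ℝ :=
  n * (n + m) / (4 * (n + m + 2) * (n + m / 2 + 1) * (n + m / 2))

/-- `f₃(m) = (8n + m(m+2)(m+n+2))/(4(m+n+2)(2n+m)(2n+m+2))`. -/
noncomputable def f₃ (n m : ℝ) : ℝ :=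
  (8 * n + m * (m + 2) * (m + n + 2)) / (4 * (m + n + 2) * (2 * n + m) * (2 * n + m + 2))

/-- `f̃₄(m) = (1/2)(1 - (m+n)/(m+n+1) - ((m/2+1)(m+n))/((m+n+1)(m/2+n)))`. -/
noncomputable def f₄tilde (n m : ℝ) : ℝ :=
  (1 / 2) * (1 - (m + n) / (m + n + 1) - ((m / 2 + 1) * (m + n)) / ((m + n + 1) * (m / 2 + n)))

/-- `f₄(m) = 1/4 - f̃₄(m) + f₃(m)`. -/
noncomputable def f₄ (n m : ℝ) : ℝ := 1 / 4 - f₄tilde n m + f₃ n m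

/-- The closed form of the recursion for the curvature coefficients `α_k`, `β_k` of the
expected number of k-chains in a small causal diamond: if `α₁ = -n/(24(n+1)(n+2))`,
`β₁ = n/(24(n+1))`, and for all `k ≥ 1`
`α_{k+1} = (β_k - 1/6)f₂(kn) + α_k g₁(kn)` and
`β_{k+1} = 1/24 + (β_k - 1/6)f₂(kn) - (1/6)f₃(kn) + β_k f₄(kn)`, then for all `k ≥ 1`
`α_k = -nk/(12(kn+2)((k+1)n+2))` and `β_k = nk/(12((k+1)n+2))`. -/
theorem stmt10 (n : ℕ) (hn : 2 ≤ n) (α β : ℕ → ℝ)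
    (hα1 : α 1 = -(n : ℝ) / (24 * ((n : ℝ) + 1) * ((n : ℝ) + 2)))
    (hβ1 : β 1 = (n : ℝ) / (24 * ((n : ℝ) + 1)))
    (hα : ∀ k : ℕ, 1 ≤ k →
      α (k + 1) = (β k - 1 / 6) * f₂ (n : ℝ) ((k : ℝ) * n) + α k * g₁ (n : ℝ) ((k : ℝ) * n))
    (hβ : ∀ k : ℕ, 1 ≤ k →
      β (k + 1) = 1 / 24 + (β k - 1 / 6) * f₂ (n : ℝ) ((k : ℝ) * n)
        - (1 / 6) * f₃ (n : ℝ) ((k : ℝ) * n) + β k * f₄ (n : ℝ) ((k : ℝ) * n)) :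
    ∀ k : ℕ, 1 ≤ k →
      α k = -((n : ℝ) * k) / (12 * ((k : ℝ) * n + 2) * (((k : ℝ) + 1) * n + 2)) ∧
      β k = (n : ℝ) * k / (12 * (((k : ℝ) + 1) * n + 2)) := by
  have hx : (2:ℝ) ≤ (n:ℝ) := by exact_mod_cast hn
  intro k hk
  induction k with
  | zero => omega
  | succ k ih =>
    rcases Nat.eq_or_lt_of_le hk with h1 | h1
    · have hk0 : k = 0 := by omega
      subst hk0
      have e1 : (n:ℝ) + 1 ≠ 0 := by positivity
      have e2 : (n:ℝ) + 2 ≠ 0 := by positivity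
      constructor
      · rw [hα1]; push_cast
        rw [div_eq_div_iff (by positivity) (by positivity)]; ring
      · rw [hβ1]; push_cast
        rw [div_eq_div_iff (by positivity) (by positivity)]; ring
    · have hk1 : 1 ≤ k := by omega
      obtain ⟨hαk, hβk⟩ := ih hk1
      have hK : (1:ℝ) ≤ (k:ℝ) := by exact_mod_cast hk1
      set x := (n:ℝ)
      set K := (k:ℝ)
      have h1 : x + K * x + 2 ≠ 0 := by nlinarith
      have h2 : x + K * x / 2 ≠ 0 := by nlinarith
      have h3 : x + K * x / 2 + 1 ≠ 0 := by nlinarith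
      have h4 : K * x + x + 1 ≠ 0 := by nlinarith
      have h5 : K * x / 2 + x ≠ 0 := by nlinarith
      have h6 : 2 * x + K * x ≠ 0 := by nlinarith
      have h7 : 2 * x + K * x + 2 ≠ 0 := by nlinarith
      have h8 : K * x + x + 2 ≠ 0 := by nlinarith
      have h9 : K * x + 2 ≠ 0 := by nlinarith
      have h10 : (K + 1) * x + 2 ≠ 0 := by nlinarith
      have h11 : (K + 1 + 1) * x + 2 ≠ 0 := by nlinarith
      constructor
      · rw [hα k hk1, hαk, hβk, g₁, f₂]
        push_cast
        field_simp
        ring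
      · rw [hβ k hk1, hβk, f₄, f₄tilde, f₃, f₂]
        push_cast
        field_simp
        ring
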